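/- arXiv:2412.14073 — 9 statements merged into one kernel-verified Lean document; each statement's English description precedes it below -/
import Mathlib

section
/- Soundness of the logic LCA: for every formula φ of the language L, if φ is derivable in the proof system LCA then φ is valid, i.e., (S,U) ⊨ φ for every model (S,U). -/
/-- The language L0 of explicit belief: atoms, negation, conjunction, explicit belief. -/
inductive L0 (Agt Atm : Type) : Type
  | atom : Atm → L0 Agt Atm
  | neg  : L0 Agt Atm → L0 Agt Atm
  | and  : L0 Agt Atm → L0 Agt Atm → L0 Agt Atm
  | bel  : Agt → L0 Agt Atm → L0 Agt Atm

/-- Material implication in L0, as the usual abbreviation. -/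
def L0.impl {Agt Atm : Type} (a b : L0 Agt Atm) : L0 Agt Atm := .neg (.and a (.neg b))

/-- A state: a belief base for each agent together with a valuation. -/
structure State (Agt Atm : Type) where
  base : Agt → Set (L0 Agt Atm)
  val  : Set Atm

/-- Satisfaction of an L0 formula at a state. -/
def sat0 {Agt Atm : Type} (S : State Agt Atm) : L0 Agt Atm → Prop
  | .atom p  => p ∈ S.val
  | .neg a   => ¬ sat0 S a
  | .and a b => sat0 S a ∧ sat0 S b
  | .bel i a => a ∈ S.base i

/-- Epistemic relation R(i): S' satisfies every formula in agent i's belief base at S. -/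
def epi {Agt Atm : Type} (i : Agt) (S S' : State Agt Atm) : Prop :=
  ∀ a ∈ S.base i, sat0 S' a

/-- Attraction relation A(i): S' satisfies some α with (α → rew i) in agent i's belief base. -/
def attr {Agt Atm : Type} (rew : Agt → Atm) (i : Agt) (S S' : State Agt Atm) : Prop :=
  ∃ a : L0 Agt Atm, (L0.impl a (.atom (rew i))) ∈ S.base i ∧ sat0 S' a

/-- Repulsion relation P(i): S' satisfies some α with (α → pun i) in agent i's belief base. -/
def repu {Agt Atm : Type} (pun : Agt → Atm) (i : Agt) (S S' : State Agt Atm) : Prop :=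
  ∃ a : L0 Agt Atm, (L0.impl a (.atom (pun i))) ∈ S.base i ∧ sat0 S' a

/-- The language L: L0 formulas, Boolean connectives, implicit belief `box`,
complete attraction `ca`, complete repulsion `cr`, realistic attraction `ra`,
realistic repulsion `rr`. -/
inductive Formula (Agt Atm : Type) : Type
  | emb : L0 Agt Atm → Formula Agt Atm
  | neg : Formula Agt Atm → Formula Agt Atm
  | and : Formula Agt Atm → Formula Agt Atm → Formula Agt Atm
  | box : Agt → Formula Agt Atm → Formula Agt Atm
  | ca  : Agt → Formula Agt Atm → Formula Agt Atm
  | cr  : Agt → Formula Agt Atm → Formula Agt Atm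
  | ra  : Agt → Formula Agt Atm → Formula Agt Atm
  | rr  : Agt → Formula Agt Atm → Formula Agt Atm

/-- Material implication in L. -/
def Formula.impF {Agt Atm : Type} (f g : Formula Agt Atm) : Formula Agt Atm :=
  .neg (.and f (.neg g))

/-- Biconditional in L. -/
def Formula.iffF {Agt Atm : Type} (f g : Formula Agt Atm) : Formula Agt Atm :=
  .and (f.impF g) (g.impF f)

/-- Disjunction in L: φ ∨ ψ := ¬(¬φ ∧ ¬ψ). -/
def Formula.orF {Agt Atm : Type} (f g : Formula Agt Atm) : Formula Agt Atm :=
  .neg (.and (.neg f) (.neg g))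

/-- Truth of an L formula at a state S relative to a context U. -/
def sat {Agt Atm : Type} (rew pun : Agt → Atm) (U : Set (State Agt Atm)) :
    State Agt Atm → Formula Agt Atm → Prop
  | S, .emb a   => sat0 S a
  | S, .neg f   => ¬ sat rew pun U S f
  | S, .and f g => sat rew pun U S f ∧ sat rew pun U S g
  | S, .box i f => ∀ S' ∈ U, epi i S S' → sat rew pun U S' f
  | S, .ca i f  => ∀ S' ∈ U, sat rew pun U S' f → attr rew i S S'
  | S, .cr i f  => ∀ S' ∈ U, sat rew pun U S' f → repu pun i S S'
  | S, .ra i f  => ∀ S' ∈ U, sat rew pun U S' f → epi i S S' → attr rew i S S'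
  | S, .rr i f  => ∀ S' ∈ U, sat rew pun U S' f → epi i S S' → repu pun i S S'

/-- Validity: truth at every model (S,U) with S ∈ U. -/
def valid {Agt Atm : Type} (rew pun : Agt → Atm) (f : Formula Agt Atm) : Prop :=
  ∀ (U : Set (State Agt Atm)) (S : State Agt Atm), S ∈ U → sat rew pun U S f

/-- Index type for the four motivational operators O ∈ {CA(i), CR(i), RA(i), RR(i)}. -/
inductive MOp : Type | ca | cr | ra | rr

/-- Application of an indexed motivational operator. -/
def applyO {Agt Atm : Type} (o : MOp) (i : Agt) (f : Formula Agt Atm) : Formula Agt Atm :=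
  match o with
  | .ca => .ca i f
  | .cr => .cr i f
  | .ra => .ra i f
  | .rr => .rr i f

/-- The proof system LCA: classical propositional reasoning over L
(all instances of propositional tautologies plus modus ponens),
together with axioms (A1)-(A11) and rules (R1)-(R3). -/
inductive Prov {Agt Atm : Type} (rew pun : Agt → Atm) : Formula Agt Atm → Prop
  | taut (f : Formula Agt Atm)
      (h : ∀ v : Formula Agt Atm → Prop,
        (∀ g, v (.neg g) ↔ ¬ v g) →
        (∀ g₁ g₂, v (.and g₁ g₂) ↔ v g₁ ∧ v g₂) → v f) :
      Prov rew pun f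
  | mp {f g : Formula Agt Atm} :
      Prov rew pun (f.impF g) → Prov rew pun f → Prov rew pun g
  | a1 (i : Agt) (f g : Formula Agt Atm) :
      Prov rew pun (((Formula.box i f).and (.box i (f.impF g))).impF (.box i g))
  | a2 (o : MOp) (i : Agt) (f g : Formula Agt Atm) :
      Prov rew pun (((applyO o i f).and (applyO o i ((Formula.neg f).and g))).impF (applyO o i g))
  | a3 (i : Agt) (a : L0 Agt Atm) :
      Prov rew pun ((Formula.emb (.bel i a)).impF (.box i (.emb a)))
  | a4 (i : Agt) (a : L0 Agt Atm) :
      Prov rew pun ((Formula.emb (.bel i (a.impl (.atom (rew i))))).impF (.ca i (.emb a)))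
  | a5 (i : Agt) (a : L0 Agt Atm) :
      Prov rew pun ((Formula.emb (.bel i (a.impl (.atom (pun i))))).impF (.cr i (.emb a)))
  | a6 (i : Agt) (f : Formula Agt Atm) :
      Prov rew pun ((Formula.ca i f).impF (.ra i f))
  | a7 (i : Agt) (f : Formula Agt Atm) :
      Prov rew pun ((Formula.cr i f).impF (.rr i f))
  | a8 (i : Agt) (f : Formula Agt Atm) :
      Prov rew pun ((Formula.box i f).impF (.ra i (.neg f)))
  | a9 (i : Agt) (f : Formula Agt Atm) :
      Prov rew pun ((Formula.box i f).impF (.rr i (.neg f)))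
  | a10 (i : Agt) (f : Formula Agt Atm) :
      Prov rew pun ((Formula.ra i f).impF (.box i (f.impF (.emb (.atom (rew i))))))
  | a11 (i : Agt) (f : Formula Agt Atm) :
      Prov rew pun ((Formula.rr i f).impF (.box i (f.impF (.emb (.atom (pun i))))))
  | r1 {f : Formula Agt Atm} (i : Agt) :
      Prov rew pun f → Prov rew pun (.box i f)
  | r2 {f : Formula Agt Atm} (o : MOp) (i : Agt) :
      Prov rew pun f → Prov rew pun (applyO o i (.neg f))
  | r3 {f g : Formula Agt Atm} (o : MOp) (i : Agt) :
      Prov rew pun (f.iffF g) → Prov rew pun ((applyO o i f).iffF (applyO o i g))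

/-- Soundness of LCA: every formula derivable in LCA is valid. -/
theorem lca_soundness {Agt Atm : Type} [Fintype Agt] [Countable Atm] [Infinite Atm]
    (rew pun : Agt → Atm)
    (hrew : Function.Injective rew) (hpun : Function.Injective pun)
    (hdistinct : ∀ i j : Agt, rew i ≠ pun j)
    (φ : Formula Agt Atm) (h : Prov rew pun φ) :
    valid rew pun φ := by

  induction h with
  | taut f h =>
      intro U S hS
      exact h (sat rew pun U S) (fun g => Iff.rfl) (fun g₁ g₂ => Iff.rfl)
  | mp h1 h2 ih1 ih2 =>
      intro U S hS
      have := ih1 U S hS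
      have := ih2 U S hS
      simp only [sat, Formula.impF] at *
      tauto
  | a1 i f g =>
      intro U S hS
      simp only [sat, Formula.impF]
      push_neg
      intro h1 S' hS' hepi
      exact (h1.2 S' hS' hepi) (h1.1 S' hS' hepi)
  | a2 o i f g =>
      intro U S hS
      cases o <;>
      · simp only [sat, Formula.impF, applyO]
        push_neg
        intro h1
        intro S' hS'
        first
        | · intro hg
            by_cases hf : sat rew pun U S' f
            · exact h1.1 S' hS' hf
            · exact h1.2 S' hS' ⟨hf, hg⟩
        | · intro hg hepi
            by_cases hf : sat rew pun U S' f
            · exact h1.1 S' hS' hf hepi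
            · exact h1.2 S' hS' ⟨hf, hg⟩ hepi
  | a3 i a =>
      intro U S hS
      simp only [sat, Formula.impF, sat0]
      push_neg
      intro hb S' hS' hepi
      exact hepi a hb
  | a4 i a =>
      intro U S hS
      simp only [sat, Formula.impF, sat0]
      push_neg
      intro hb S' hS' ha
      exact ⟨a, hb, ha⟩
  | a5 i a =>
      intro U S hS
      simp only [sat, Formula.impF, sat0]
      push_neg
      intro hb S' hS' ha
      exact ⟨a, hb, ha⟩
  | a6 i f =>
      intro U S hS
      simp only [sat, Formula.impF]
      push_neg
      intro h1 S' hS' hf _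
      exact h1 S' hS' hf
  | a7 i f =>
      intro U S hS
      simp only [sat, Formula.impF]
      push_neg
      intro h1 S' hS' hf _
      exact h1 S' hS' hf
  | a8 i f =>
      intro U S hS
      simp only [sat, Formula.impF]
      push_neg
      intro h1 S' hS' hnf hepi
      exact absurd (h1 S' hS' hepi) hnf
  | a9 i f =>
      intro U S hS
      simp only [sat, Formula.impF]
      push_neg
      intro h1 S' hS' hnf hepi
      exact absurd (h1 S' hS' hepi) hnf
  | a10 i f =>
      intro U S hS
      simp only [sat, Formula.impF]
      push_neg
      intro h1 S' hS' hepi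
      intro hf
      by_contra hr
      obtain ⟨a, hab, ha⟩ := h1 S' hS' hf hepi
      have := hepi _ hab
      simp only [L0.impl, sat0] at this
      push_neg at this
      exact hr (this ha)
  | a11 i f =>
      intro U S hS
      simp only [sat, Formula.impF]
      push_neg
      intro h1 S' hS' hepi
      intro hf
      by_contra hr
      obtain ⟨a, hab, ha⟩ := h1 S' hS' hf hepi
      have := hepi _ hab
      simp only [L0.impl, sat0] at this
      push_neg at this
      exact hr (this ha)
  | r1 i h ih =>
      intro U S hS
      intro S' hS' _
      exact ih U S' hS'
  | r2 o i h ih =>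
      intro U S hS
      cases o <;>
      · simp only [sat, applyO]
        first
        | exact fun S' hS' hnf => absurd (ih U S' hS') hnf
        | exact fun S' hS' hnf _ => absurd (ih U S' hS') hnf
  | r3 o i h ih =>
      intro U S hS
      rename_i f g
      have hiff : ∀ S' ∈ U, (sat rew pun U S' f ↔ sat rew pun U S' g) := by
        intro S' hS'
        have := ih U S' hS'
        simp only [sat, Formula.iffF, Formula.impF] at this
        tauto
      have hO : sat rew pun U S (applyO o i f) ↔ sat rew pun U S (applyO o i g) := by
        cases o <;>
        · simp only [sat, applyO]
          constructor
          first
          | exact fun h1 S' hS' hg => h1 S' hS' ((hiff S' hS').2 hg)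
          | exact fun h1 S' hS' hg hepi => h1 S' hS' ((hiff S' hS').2 hg) hepi
          first
          | exact fun h1 S' hS' hf => h1 S' hS' ((hiff S' hS').1 hf)
          | exact fun h1 S' hS' hf hepi => h1 S' hS' ((hiff S' hS').1 hf) hepi
      simp only [sat, Formula.iffF, Formula.impF]
      tauto
end

section
/- Validity of axiom A2 for complete attraction: for every agent i ∈ Agt and all formulas φ, ψ of L, the formula (CA(i)φ ∧ CA(i)(¬φ ∧ ψ)) → CA(i)ψ is valid, i.e., true in every model (S,U). -/
/-- Validity of axiom A2 for complete attraction: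
(CA(i)φ ∧ CA(i)(¬φ ∧ ψ)) → CA(i)ψ is valid. -/
theorem valid_A2_ca {Agt Atm : Type} [Fintype Agt] [Countable Atm] [Infinite Atm]
    (rew pun : Agt → Atm)
    (hrew : Function.Injective rew) (hpun : Function.Injective pun)
    (hdistinct : ∀ i j : Agt, rew i ≠ pun j)
    (i : Agt) (φ ψ : Formula Agt Atm) :
    valid rew pun
      (((Formula.ca i φ).and (.ca i ((Formula.neg φ).and ψ))).impF (.ca i ψ)) := by
  intro U S hS
  simp only [Formula.impF, sat, not_and, not_forall, not_not]
  rintro ⟨h1, h2⟩ ⟨S', hS', hψ, hna⟩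
  apply hna
  by_cases hφ : sat rew pun U S' φ
  · exact h1 S' hS' hφ
  · exact h2 S' hS' ⟨hφ, hψ⟩
end

section
/- Validity of axiom A8: for every agent i ∈ Agt and every formula φ of L, the formula Box(i)φ → RA(i)¬φ is valid, i.e., true in every model (S,U). -/
/-- Validity of axiom A8: Box(i)φ → RA(i)¬φ is valid. -/
theorem valid_A8 {Agt Atm : Type} [Fintype Agt] [Countable Atm] [Infinite Atm]
    (rew pun : Agt → Atm)
    (hrew : Function.Injective rew) (hpun : Function.Injective pun)
    (hdistinct : ∀ i j : Agt, rew i ≠ pun j)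
    (i : Agt) (φ : Formula Agt Atm) :
    valid rew pun ((Formula.box i φ).impF (.ra i (.neg φ))) := by
  intro U S _hS
  simp only [Formula.impF, sat, not_and, not_not]
  intro hbox S' hS' hnφ hepi
  exact absurd (hbox S' hS' hepi) hnφ
end

section
/- Validity of axiom A10: for every agent i ∈ Agt and every formula φ of L, the formula RA(i)φ → Box(i)(φ → rew(i)) is valid, i.e., true in every model (S,U). -/
theorem sat0_impl {Agt Atm : Type} {S : State Agt Atm} {a b : L0 Agt Atm} :
    sat0 S (a.impl b) ↔ (sat0 S a → sat0 S b) := by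
  simp only [L0.impl, sat0, not_and, not_not]

theorem sat_impF {Agt Atm : Type} {rew pun : Agt → Atm} {U : Set (State Agt Atm)}
    {S : State Agt Atm} {f g : Formula Agt Atm} :
    sat rew pun U S (f.impF g) ↔ (sat rew pun U S f → sat rew pun U S g) := by
  simp only [Formula.impF, sat, not_and, not_not]

theorem epi.sat0_of_impl_mem {Agt Atm : Type} {i : Agt} {S S' : State Agt Atm}
    {a b : L0 Agt Atm} (hepi : epi i S S') (himpl : a.impl b ∈ S.base i) (ha : sat0 S' a) :
    sat0 S' b :=
  sat0_impl.mp (hepi _ himpl) ha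

theorem rew_mem_val_of_epi_of_attr {Agt Atm : Type} {rew : Agt → Atm} {i : Agt}
    {S S' : State Agt Atm} (hepi : epi i S S') (hattr : attr rew i S S') : rew i ∈ S'.val :=
  let ⟨_, himpl, ha⟩ := hattr
  hepi.sat0_of_impl_mem himpl ha

theorem valid_A10_general {Agt Atm : Type}
    (rew pun : Agt → Atm)
    (i : Agt) (φ : Formula Agt Atm) :
    valid rew pun
      ((Formula.ra i φ).impF (.box i (φ.impF (.emb (.atom (rew i)))))) := by
  intro U S _
  rw [sat_impF]
  intro hra S' hS' hepi
  rw [sat_impF]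
  intro hφ
  exact rew_mem_val_of_epi_of_attr hepi (hra S' hS' hφ hepi)

/-- Validity of axiom A10: RA(i)φ → Box(i)(φ → rew(i)) is valid. -/
theorem valid_A10 {Agt Atm : Type} [Fintype Agt] [Countable Atm] [Infinite Atm]
    (rew pun : Agt → Atm)
    (hrew : Function.Injective rew) (hpun : Function.Injective pun)
    (hdistinct : ∀ i j : Agt, rew i ≠ pun j)
    (i : Agt) (φ : Formula Agt Atm) :
    valid rew pun
      ((Formula.ra i φ).impF (.box i (φ.impF (.emb (.atom (rew i)))))) :=
  valid_A10_general rew pun i φ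
end

section
/- Derivable disjunction rule for complete attraction: for every agent i ∈ Agt and all formulas φ, ψ of L, the formula (CA(i)φ ∧ CA(i)ψ) → CA(i)(φ ∨ ψ) is derivable in the proof system LCA. -/
/-- Derivable disjunction rule for complete attraction:
(CA(i)φ ∧ CA(i)ψ) → CA(i)(φ ∨ ψ) is derivable in LCA. -/
theorem lca_derivable_ca_or {Agt Atm : Type} [Fintype Agt] [Countable Atm] [Infinite Atm]
    (rew pun : Agt → Atm)
    (hrew : Function.Injective rew) (hpun : Function.Injective pun)
    (hdistinct : ∀ i j : Agt, rew i ≠ pun j)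
    (i : Agt) (φ ψ : Formula Agt Atm) :
    Prov rew pun (((Formula.ca i φ).and (.ca i ψ)).impF (.ca i (φ.orF ψ))) := by
  have taut : ∀ f : Formula Agt Atm,
      (∀ v : Formula Agt Atm → Prop,
        (∀ g, v (.neg g) ↔ ¬ v g) →
        (∀ g₁ g₂, v (.and g₁ g₂) ↔ v g₁ ∧ v g₂) → v f) → Prov rew pun f :=
    fun f h => Prov.taut f h
  -- abbreviations
  set X1 : Formula Agt Atm := .neg (ψ.impF ψ) with hX1
  set Z : Formula Agt Atm := (Formula.neg φ).and ψ with hZ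
  set Y1 : Formula Agt Atm := (Formula.neg ψ).and Z with hY1
  set W : Formula Agt Atm := (Formula.neg φ).and (φ.orF ψ) with hW
  have tψ : Prov rew pun (ψ.impF ψ) := by
    apply taut; intro v hn ha
    simp only [Formula.impF, hn, ha]; tauto
  have h2 : Prov rew pun (.ca i X1) := Prov.r2 .ca i tψ
  have hiff1 : Prov rew pun (X1.iffF Y1) := by
    apply taut; intro v hn ha
    simp only [hX1, hY1, hZ, Formula.iffF, Formula.impF, hn, ha]; tauto
  have hr3 : Prov rew pun ((Formula.ca i X1).iffF (.ca i Y1)) := Prov.r3 .ca i hiff1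
  have hext1 : Prov rew pun (((Formula.ca i X1).iffF (.ca i Y1)).impF
      ((Formula.ca i X1).impF (.ca i Y1))) := by
    apply taut; intro v hn ha
    simp only [Formula.iffF, Formula.impF, hn, ha]; tauto
  have h3 : Prov rew pun (.ca i Y1) := Prov.mp (Prov.mp hext1 hr3) h2
  have ha2a : Prov rew pun (((Formula.ca i ψ).and (.ca i Y1)).impF (.ca i Z)) :=
    Prov.a2 .ca i ψ Z
  have comb : Prov rew pun ((((Formula.ca i ψ).and (.ca i Y1)).impF (.ca i Z)).impF
      ((Formula.ca i Y1).impF ((Formula.ca i ψ).impF (.ca i Z)))) := by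
    apply taut; intro v hn ha
    simp only [Formula.impF, hn, ha]; tauto
  have h4 : Prov rew pun ((Formula.ca i ψ).impF (.ca i Z)) :=
    Prov.mp (Prov.mp comb ha2a) h3
  have hiff2 : Prov rew pun (Z.iffF W) := by
    apply taut; intro v hn ha
    simp only [hZ, hW, Formula.iffF, Formula.impF, Formula.orF, hn, ha]; tauto
  have hr3b : Prov rew pun ((Formula.ca i Z).iffF (.ca i W)) := Prov.r3 .ca i hiff2
  have hext2 : Prov rew pun (((Formula.ca i Z).iffF (.ca i W)).impF
      ((Formula.ca i Z).impF (.ca i W))) := by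
    apply taut; intro v hn ha
    simp only [Formula.iffF, Formula.impF, hn, ha]; tauto
  have h5 : Prov rew pun ((Formula.ca i Z).impF (.ca i W)) := Prov.mp hext2 hr3b
  have ha2b : Prov rew pun (((Formula.ca i φ).and (.ca i W)).impF (.ca i (φ.orF ψ))) :=
    Prov.a2 .ca i φ (φ.orF ψ)
  have final : Prov rew pun (((Formula.ca i ψ).impF (.ca i Z)).impF
      (((Formula.ca i Z).impF (.ca i W)).impF
        ((((Formula.ca i φ).and (.ca i W)).impF (.ca i (φ.orF ψ))).impF
          (((Formula.ca i φ).and (.ca i ψ)).impF (.ca i (φ.orF ψ)))))) := by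
    apply taut; intro v hn ha
    simp only [Formula.impF, hn, ha]; tauto
  exact Prov.mp (Prov.mp (Prov.mp final h4) h5) ha2b
end

section
/- Transitivity of preference: for every agent i ∈ Agt and all formulas φ1, φ2, φ3 of L, the formula ((φ1 ≺(i) φ2) ∧ (φ2 ≺(i) φ3)) → (φ1 ≺(i) φ3) is valid, i.e., true in every model (S,U). -/
/-- Mot(i)φ := CA(i)φ ∧ ¬CR(i)φ. -/
def Mot {Agt Atm : Type} (i : Agt) (f : Formula Agt Atm) : Formula Agt Atm :=
  (Formula.ca i f).and (.neg (.cr i f))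

/-- Demot(i)φ := CR(i)φ ∧ ¬CA(i)φ. -/
def Demot {Agt Atm : Type} (i : Agt) (f : Formula Agt Atm) : Formula Agt Atm :=
  (Formula.cr i f).and (.neg (.ca i f))

/-- Preference (ψ ≺(i) φ) := (Mot(i)φ ∧ ¬Mot(i)ψ) ∨ (Demot(i)ψ ∧ ¬Demot(i)φ). -/
def Pref {Agt Atm : Type} (i : Agt) (g f : Formula Agt Atm) : Formula Agt Atm :=
  ((Mot i f).and (.neg (Mot i g))).orF ((Demot i g).and (.neg (Demot i f)))

/-- Transitivity of preference: ((φ1 ≺(i) φ2) ∧ (φ2 ≺(i) φ3)) → (φ1 ≺(i) φ3) is valid. -/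
theorem pref_trans {Agt Atm : Type} [Fintype Agt] [Countable Atm] [Infinite Atm]
    (rew pun : Agt → Atm)
    (hrew : Function.Injective rew) (hpun : Function.Injective pun)
    (hdistinct : ∀ i j : Agt, rew i ≠ pun j)
    (i : Agt) (φ₁ φ₂ φ₃ : Formula Agt Atm) :
    valid rew pun (((Pref i φ₁ φ₂).and (Pref i φ₂ φ₃)).impF (Pref i φ₁ φ₃)) := by
  intro U S _
  simp only [valid, sat, Pref, Mot, Demot, Formula.orF, Formula.impF, Formula.and]
  tauto
end

section
/- Transitivity of realistic preference: for every agent i ∈ Agt and all formulas φ1, φ2, φ3 of L, the formula ((φ1 ≺ʳ(i) φ2) ∧ (φ2 ≺ʳ(i) φ3)) → (φ1 ≺ʳ(i) φ3) is valid, i.e., true in every model (S,U). -/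
/-- RMot(i)φ := RA(i)φ ∧ ¬RR(i)φ. -/
def RMot {Agt Atm : Type} (i : Agt) (f : Formula Agt Atm) : Formula Agt Atm :=
  (Formula.ra i f).and (.neg (.rr i f))

/-- RDemot(i)φ := RR(i)φ ∧ ¬RA(i)φ. -/
def RDemot {Agt Atm : Type} (i : Agt) (f : Formula Agt Atm) : Formula Agt Atm :=
  (Formula.rr i f).and (.neg (.ra i f))

/-- Realistic preference (ψ ≺ʳ(i) φ) := (RMot(i)φ ∧ ¬RMot(i)ψ) ∨ (RDemot(i)ψ ∧ ¬RDemot(i)φ). -/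
def RPref {Agt Atm : Type} (i : Agt) (g f : Formula Agt Atm) : Formula Agt Atm :=
  ((RMot i f).and (.neg (RMot i g))).orF ((RDemot i g).and (.neg (RDemot i f)))

/-- Transitivity of realistic preference:
((φ1 ≺ʳ(i) φ2) ∧ (φ2 ≺ʳ(i) φ3)) → (φ1 ≺ʳ(i) φ3) is valid. -/
theorem rpref_trans {Agt Atm : Type} [Fintype Agt] [Countable Atm] [Infinite Atm]
    (rew pun : Agt → Atm)
    (hrew : Function.Injective rew) (hpun : Function.Injective pun)
    (hdistinct : ∀ i j : Agt, rew i ≠ pun j)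
    (i : Agt) (φ₁ φ₂ φ₃ : Formula Agt Atm) :
    valid rew pun (((RPref i φ₁ φ₂).and (RPref i φ₂ φ₃)).impF (RPref i φ₁ φ₃)) := by
  intro U S hS
  simp only [RPref, RMot, RDemot, Formula.orF, Formula.impF, sat] at *
  tauto
end

section
/- Non-expressibility of complete attraction: in the single-agent setting Agt = {1}, for every atomic proposition p ∈ Atm and every formula φ of L containing no occurrence of the complete attraction operator CA, it is not the case that CA(1)p ↔ φ is valid, i.e., there exists a model (S,U) in which (S,U) ⊨ CA(1)p and (S,U) ⊭ φ, or vice versa. -/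
/-- φ contains no occurrence of the operator ca. -/
def CAFree {Agt Atm : Type} : Formula Agt Atm → Prop
  | .emb _ => True
  | .neg f => CAFree f
  | .and f g => CAFree f ∧ CAFree g
  | .box _ f => CAFree f
  | .ca _ _ => False
  | .cr _ f => CAFree f
  | .ra _ f => CAFree f
  | .rr _ f => CAFree f

namespace CAAux

variable {Atm : Type}

/-- A contradictory L0 formula. -/
def F (p : Atm) : L0 Unit Atm := .and (.atom p) (.neg (.atom p))

/-- The formula (¬F → pun), making everything repulsive. -/
def G (pun : Unit → Atm) (p : Atm) : L0 Unit Atm :=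
  L0.impl (.neg (F p)) (.atom (pun ()))

/-- The common belief base. -/
def B (pun : Unit → Atm) (p : Atm) : Set (L0 Unit Atm) := {F p, G pun p}

/-- State with empty valuation. -/
def S0 (pun : Unit → Atm) (p : Atm) : State Unit Atm := ⟨fun _ => B pun p, ∅⟩

/-- State where p holds. -/
def T0 (pun : Unit → Atm) (p : Atm) : State Unit Atm := ⟨fun _ => B pun p, {p}⟩

lemma sat0_F_false (p : Atm) (W : State Unit Atm) : ¬ sat0 W (F p) := by
  simp [F, sat0]

lemma repu_all (pun : Unit → Atm) (p : Atm) (i : Unit) (W S' : State Unit Atm)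
    (h : W.base i = B pun p) : repu pun i W S' := by
  refine ⟨.neg (F p), ?_, ?_⟩
  · rw [h]
    have : (L0.impl (.neg (F p)) (.atom (pun i)) : L0 Unit Atm) = G pun p := rfl
    rw [this]
    exact Or.inr rfl
  · exact sat0_F_false p S'

lemma attr_none (rew pun : Unit → Atm) (p : Atm) (hd : rew () ≠ pun ())
    (i : Unit) (W S' : State Unit Atm) (h : W.base i = B pun p) :
    ¬ attr rew i W S' := by
  rintro ⟨a, hmem, _⟩
  rw [h] at hmem
  rcases hmem with h1 | h2
  · exact absurd h1 (by simp [L0.impl, F])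
  · have h2' : (L0.impl a (.atom (rew i)) : L0 Unit Atm)
      = L0.impl (.neg (F p)) (.atom (pun ())) := h2
    simp only [L0.impl, L0.neg.injEq, L0.and.injEq, L0.atom.injEq] at h2'
    exact hd h2'.2

lemma epi_none (pun : Unit → Atm) (p : Atm) (i : Unit) (W S' : State Unit Atm)
    (h : W.base i = B pun p) : ¬ epi i W S' := by
  intro he
  exact sat0_F_false p S' (he (F p) (by rw [h]; exact Or.inl rfl))

lemma invariance (rew pun : Unit → Atm) (p : Atm) (hd : rew () ≠ pun ())
    (φ : Formula Unit Atm) (hφ : CAFree φ) :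
    (sat rew pun {S0 pun p} (S0 pun p) φ ↔
      sat rew pun {S0 pun p, T0 pun p} (S0 pun p) φ) := by
  induction φ with
  | emb a => exact Iff.rfl
  | neg f ih => simp only [sat]; rw [ih hφ]
  | and f g ihf ihg => simp only [sat]; rw [ihf hφ.1, ihg hφ.2]
  | box i f ih =>
      constructor <;> intro _ S' hS' he <;>
        exact absurd he (epi_none pun p i (S0 pun p) S' rfl)
  | ca i f ih => exact hφ.elim
  | cr i f ih =>
      constructor <;> intro _ S' hS' _ <;>
        exact repu_all pun p i (S0 pun p) S' rfl
  | ra i f ih =>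
      constructor <;> intro _ S' hS' _ he <;>
        exact absurd he (epi_none pun p i (S0 pun p) S' rfl)
  | rr i f ih =>
      constructor <;> intro _ S' hS' _ he <;>
        exact absurd he (epi_none pun p i (S0 pun p) S' rfl)

end CAAux

/-- Non-expressibility of complete attraction in the single-agent setting:
for every atom p and every CA-free formula φ, CA(1)p ↔ φ is not valid. -/
theorem ca_not_expressible {Atm : Type} [Countable Atm] [Infinite Atm]
    (rew pun : Unit → Atm)
    (hdistinct : ∀ i j : Unit, rew i ≠ pun j)
    (p : Atm) (φ : Formula Unit Atm) (hφ : CAFree φ) :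
    ¬ valid rew pun ((Formula.ca () (.emb (.atom p))).iffF φ) := by
  intro hval
  have hd : rew () ≠ pun () := hdistinct () ()
  set S := CAAux.S0 pun p with hS
  set T := CAAux.T0 pun p with hT
  set U1 : Set (State Unit Atm) := {S} with hU1
  set U2 : Set (State Unit Atm) := {S, T} with hU2
  have h1 := hval U1 S rfl
  have h2 := hval U2 S (Or.inl rfl)
  simp only [Formula.iffF, Formula.impF, sat, not_and, not_not] at h1 h2
  -- CA p holds in (S, U1)
  have hca1 : sat rew pun U1 S (.ca () (.emb (.atom p))) := by
    intro S' hS' hp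
    have : S' = S := hS'
    subst this
    exact absurd hp (by simp [hS, CAAux.S0, sat, sat0])
  -- CA p fails in (S, U2)
  have hca2 : ¬ sat rew pun U2 S (.ca () (.emb (.atom p))) := by
    intro h
    exact CAAux.attr_none rew pun p hd () S T rfl
      (h T (Or.inr rfl) (by simp [hT, CAAux.T0, sat, sat0]))
  have hφ1 : sat rew pun U1 S φ := h1.1 hca1
  have hφ2 : sat rew pun U2 S φ :=
    (CAAux.invariance rew pun p hd φ hφ).mp hφ1
  exact hca2 (h2.2 hφ2)
end

section
/- From NDMA to belief base context: let M = (W, B, E, A, RAcc, V) be an NDMA for the repulsion-free fragment, and define the context U = {S^w : w ∈ W} where S^w is the state ((B(i,w))_{i∈Agt}, {p ∈ Atm : w ∈ V(p)}). Then for every repulsion-free formula φ of L and every w ∈ W: (M, w) ⊨ φ if and only if (S^w, U) ⊨ φ. -/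
/-- The repulsion-free fragment of the language L: L0 formulas, Boolean connectives,
implicit belief `box`, complete attraction `ca`, realistic attraction `ra`. -/
inductive FormulaRF (Agt Atm : Type) : Type
  | emb : L0 Agt Atm → FormulaRF Agt Atm
  | neg : FormulaRF Agt Atm → FormulaRF Agt Atm
  | and : FormulaRF Agt Atm → FormulaRF Agt Atm → FormulaRF Agt Atm
  | box : Agt → FormulaRF Agt Atm → FormulaRF Agt Atm
  | ca  : Agt → FormulaRF Agt Atm → FormulaRF Agt Atm
  | ra  : Agt → FormulaRF Agt Atm → FormulaRF Agt Atm

/-- Truth of a repulsion-free formula at a state S relative to a context U. -/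
def satRF {Agt Atm : Type} (rew : Agt → Atm) (U : Set (State Agt Atm)) :
    State Agt Atm → FormulaRF Agt Atm → Prop
  | S, .emb a   => sat0 S a
  | S, .neg f   => ¬ satRF rew U S f
  | S, .and f g => satRF rew U S f ∧ satRF rew U S g
  | S, .box i f => ∀ S' ∈ U, epi i S S' → satRF rew U S' f
  | S, .ca i f  => ∀ S' ∈ U, satRF rew U S' f → attr rew i S S'
  | S, .ra i f  => ∀ S' ∈ U, satRF rew U S' f → epi i S S' → attr rew i S S'

/-- A notional doxastic model with attraction (before imposing (NDMA1)-(NDMA3)):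
worlds, belief bases, epistemic/attraction/realistic-attraction accessibility, valuation. -/
structure NDMA (Agt Atm W : Type) where
  B    : Agt → W → Set (L0 Agt Atm)
  E    : Agt → W → Set W
  A    : Agt → W → Set W
  RAcc : Agt → W → Set W
  Vmap : Atm → Set W

/-- Truth of an L0 formula at a world of an NDMA. -/
def nsat0 {Agt Atm W : Type} (M : NDMA Agt Atm W) (w : W) : L0 Agt Atm → Prop
  | .atom p  => w ∈ M.Vmap p
  | .neg a   => ¬ nsat0 M w a
  | .and a b => nsat0 M w a ∧ nsat0 M w b
  | .bel i a => a ∈ M.B i w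

/-- Truth of a repulsion-free formula at a world of an NDMA. -/
def nsat {Agt Atm W : Type} (M : NDMA Agt Atm W) : W → FormulaRF Agt Atm → Prop
  | w, .emb a   => nsat0 M w a
  | w, .neg f   => ¬ nsat M w f
  | w, .and f g => nsat M w f ∧ nsat M w g
  | w, .box i f => ∀ v ∈ M.E i w, nsat M v f
  | w, .ca i f  => ∀ v : W, nsat M v f → v ∈ M.A i w
  | w, .ra i f  => ∀ v : W, nsat M v f → v ∈ M.RAcc i w

/-- The state S^w associated to a world w of an NDMA. -/
def stateOf {Agt Atm W : Type} (M : NDMA Agt Atm W) (w : W) : State Agt Atm :=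
  ⟨fun i => M.B i w, {p : Atm | w ∈ M.Vmap p}⟩


lemma sat0_stateOf {Agt Atm W : Type} (M : NDMA Agt Atm W) (a : L0 Agt Atm) (v : W) :
    sat0 (stateOf M v) a ↔ nsat0 M v a := by
  induction a with
  | atom p => simp [sat0, nsat0, stateOf]
  | neg a ih => simp [sat0, nsat0, ih]
  | and a b iha ihb => simp [sat0, nsat0, iha, ihb]
  | bel i a ih => simp [sat0, nsat0, stateOf]

/-- From NDMA to belief base context: if M satisfies (NDMA1), (NDMA2) and (NDMA3), then
for every repulsion-free formula φ and world w, (M,w) ⊨ φ iff (S^w, U) ⊨ φ, where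
U = {S^w : w ∈ W}. -/
theorem ndma_to_context {Agt Atm W : Type} [Fintype Agt] [Countable Atm] [Infinite Atm]
    (rew pun : Agt → Atm)
    (hrew : Function.Injective rew) (hpun : Function.Injective pun)
    (hdistinct : ∀ i j : Agt, rew i ≠ pun j)
    (M : NDMA Agt Atm W)
    (hNDMA1 : ∀ (i : Agt) (w : W), M.E i w = {v : W | ∀ a ∈ M.B i w, nsat0 M v a})
    (hNDMA2 : ∀ (i : Agt) (w : W),
      M.A i w = {v : W | ∃ a : L0 Agt Atm, (L0.impl a (.atom (rew i))) ∈ M.B i w ∧ nsat0 M v a})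
    (hNDMA3 : ∀ (i : Agt) (w : W), M.RAcc i w = M.A i w ∪ (Set.univ \ M.E i w))
    (φ : FormulaRF Agt Atm) (w : W) :
    nsat M w φ ↔ satRF rew {S : State Agt Atm | ∃ v : W, S = stateOf M v} (stateOf M w) φ := by
  induction φ generalizing w with
  | emb a => exact (sat0_stateOf M a w).symm
  | neg f ih => exact not_congr (ih w)
  | and f g ihf ihg => exact and_congr (ihf w) (ihg w)
  | box i f ih =>
    constructor
    · rintro h S' ⟨v, rfl⟩ hepi
      refine (ih v).mp (h v ?_)
      rw [hNDMA1]
      intro a ha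
      exact (sat0_stateOf M a v).mp (hepi a ha)
    · intro h v hv
      refine (ih v).mpr (h _ ⟨v, rfl⟩ ?_)
      intro a ha
      rw [hNDMA1] at hv
      exact (sat0_stateOf M a v).mpr (hv a ha)
  | ca i f ih =>
    constructor
    · rintro h S' ⟨v, rfl⟩ hf
      have := h v ((ih v).mpr hf)
      rw [hNDMA2] at this
      obtain ⟨a, ha, hna⟩ := this
      exact ⟨a, ha, (sat0_stateOf M a v).mpr hna⟩
    · intro h v hv
      obtain ⟨a, ha, hsa⟩ := h _ ⟨v, rfl⟩ ((ih v).mp hv)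
      rw [hNDMA2]
      exact ⟨a, ha, (sat0_stateOf M a v).mp hsa⟩
  | ra i f ih =>
    constructor
    · rintro h S' ⟨v, rfl⟩ hf hepi
      have hv : v ∈ M.E i w := by
        rw [hNDMA1]; intro a ha; exact (sat0_stateOf M a v).mp (hepi a ha)
      have := h v ((ih v).mpr hf)
      rw [hNDMA3] at this
      rcases this with hA | ⟨_, hnE⟩
      · rw [hNDMA2] at hA
        obtain ⟨a, ha, hna⟩ := hA
        exact ⟨a, ha, (sat0_stateOf M a v).mpr hna⟩
      · exact absurd hv hnE
    · intro h v hv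
      rw [hNDMA3]
      by_cases hE : v ∈ M.E i w
      · left
        have hepi : epi i (stateOf M w) (stateOf M v) := by
          intro a ha
          rw [hNDMA1] at hE
          exact (sat0_stateOf M a v).mpr (hE a ha)
        obtain ⟨a, ha, hsa⟩ := h _ ⟨v, rfl⟩ ((ih v).mp hv) hepi
        rw [hNDMA2]
        exact ⟨a, ha, (sat0_stateOf M a v).mp hsa⟩
      · exact Or.inr ⟨trivial, hE⟩
end
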